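/- arXiv:1310.5773 — 3 statements merged into one kernel-verified Lean document; each statement's English description precedes it below -/
import Mathlib

section
/- Conversely, if (X, Y) is a supplementary difference set in Z_v with parameters (v; r, s; λ) satisfying v = 2(r + s - λ), then the binary sequences A, B defined by a_i = -1 iff i ∈ X and b_i = -1 iff i ∈ Y form a periodic Golay pair of length v. -/
open Finset

/-- Zero-extension of a sequence indexed by `ZMod v` to all of `ℤ`,
with `a_i = 0` for `i` outside `[0, v-1]`. -/
def zext (v : ℕ) (A : ZMod v → ℤ) (n : ℤ) : ℤ :=
  if 0 ≤ n ∧ n < (v : ℤ) then A (n : ZMod v) else 0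

/-- Nonperiodic autocorrelation function `NAF_A(s) = Σ_{i∈ℤ} a_i a_{i+s}`. -/
def naf (v : ℕ) (A : ZMod v → ℤ) (s : ℤ) : ℤ :=
  ∑ i ∈ Finset.range v, zext v A i * zext v A (i + s)

/-- Periodic autocorrelation function `PAF_A(s) = Σ_{i∈Z_v} a_i a_{i+s}`. -/
def paf (v : ℕ) (A : ZMod v → ℤ) (s : ZMod v) : ℤ :=
  ∑ i ∈ Finset.range v, A i * A ((i : ZMod v) + s)

/-- Number of ordered pairs `(a,b)` with `a - b = c` and both `a,b` in `X`,
or both in `Y` (counted with multiplicity over the two blocks). -/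
def sdsCount (v : ℕ) (X Y : Finset (ZMod v)) (c : ZMod v) : ℕ :=
  ((X ×ˢ X).filter fun p => p.1 - p.2 = c).card +
  ((Y ×ˢ Y).filter fun p => p.1 - p.2 = c).card

/-! With `a_i = 1 - 2·[i ∈ X]`, expanding `PAF_A(t)` gives `v - 4|X| + 4 N_X(t)`, where `N_X(t)` is
the number of representations of `t` as a difference of two elements of `X`. Adding the same
identity for `Y` and using `N_X(t) + N_Y(t) = λ` for `t ≠ 0` gives
`PAF_A(t) + PAF_B(t) = 2v - 4(r + s - λ)`, which vanishes exactly when `v = 2(r + s - λ)`. -/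

section

variable {G : Type*} [AddCommGroup G] [DecidableEq G]

theorem card_filter_sub_eq_card_filter_add_mem (X : Finset G) (s : G) :
    #{p ∈ X ×ˢ X | p.1 - p.2 = s} = #{b ∈ X | b + s ∈ X} := by
  refine card_nbij' Prod.snd (fun b => (b + s, b)) ?_ ?_ ?_ ?_
  · rintro ⟨a, b⟩ h
    simp only [mem_coe, mem_filter, mem_product, sub_eq_iff_eq_add'] at h ⊢
    obtain ⟨⟨ha, hb⟩, rfl⟩ := h
    exact ⟨hb, ha⟩
  · intro b; simp +contextual
  · rintro ⟨a, b⟩; simp +contextual [sub_eq_iff_eq_add']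
  · intro b; simp

variable [Fintype G]

theorem card_filter_add_mem (X : Finset G) (s : G) : #{i | i + s ∈ X} = #X :=
  card_nbij' (· + s) (· - s) (fun _ => by simp) (fun _ => by simp) (fun _ _ => by simp)
    (fun _ _ => by simp)

theorem sum_sign_mul_sign_add (X : Finset G) (s : G) :
    ∑ i, (if i ∈ X then -1 else 1 : ℤ) * (if i + s ∈ X then -1 else 1)
      = Fintype.card G - 4 * #X + 4 * #{b ∈ X | b + s ∈ X} := by
  calc _ = ∑ i, (1 - 2 * (if i ∈ X then 1 else 0) - 2 * (if i + s ∈ X then 1 else 0)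
        + 4 * (if i ∈ X ∧ i + s ∈ X then 1 else 0) : ℤ) :=
        sum_congr rfl fun i _ => by by_cases i ∈ X <;> by_cases i + s ∈ X <;> simp [*]
    _ = Fintype.card G - 2 * #X - 2 * #{i | i + s ∈ X} + 4 * #{b ∈ X | b + s ∈ X} := by
        simp only [sum_add_distrib, sum_sub_distrib, ← mul_sum, sum_boole, filter_and,
          inter_filter, inter_univ]
        simp
    _ = _ := by rw [card_filter_add_mem]; ring

end

theorem sum_range_natCast_eq_sum_univ {M : Type*} [AddCommMonoid M] (v : ℕ) [NeZero v]
    (f : ZMod v → M) : ∑ i ∈ range v, f i = ∑ i : ZMod v, f i :=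
  sum_nbij' (↑) ZMod.val (by simp) (fun a _ => by simpa using a.val_lt)
    (fun _ hi => ZMod.val_cast_of_lt (mem_range.1 hi)) (fun a _ => ZMod.natCast_zmod_val a)
    (fun _ _ => rfl)

theorem paf_eq_of_sign (v : ℕ) [NeZero v] (X : Finset (ZMod v)) (A : ZMod v → ℤ)
    (hA : ∀ i, A i = if i ∈ X then -1 else 1) (s : ZMod v) :
    paf v A s = v - 4 * #X + 4 * #{p ∈ X ×ˢ X | p.1 - p.2 = s} := by
  rw [paf, sum_range_natCast_eq_sum_univ v (fun i => A i * A (i + s))]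
  simp only [hA, sum_sign_mul_sign_add, ZMod.card, card_filter_sub_eq_card_filter_add_mem]

theorem sds_gives_periodic_golay_pair (v : ℕ) (hv : 0 < v)
    (X Y : Finset (ZMod v)) (lam : ℕ)
    (hparam : (v : ℤ) = 2 * ((X.card : ℤ) + (Y.card : ℤ) - (lam : ℤ)))
    (hSDS : ∀ c : ZMod v, c ≠ 0 → sdsCount v X Y c = lam)
    (A B : ZMod v → ℤ)
    (hA : ∀ i : ZMod v, A i = if i ∈ X then -1 else 1)
    (hB : ∀ i : ZMod v, B i = if i ∈ Y then -1 else 1) :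
    ∀ s : ZMod v, s ≠ 0 → paf v A s + paf v B s = 0 := by
  have : NeZero v := ⟨hv.ne'⟩
  intro s hs
  have hlam : (#{p ∈ X ×ˢ X | p.1 - p.2 = s} + #{p ∈ Y ×ˢ Y | p.1 - p.2 = s} : ℤ) = lam :=
    mod_cast hSDS s hs
  rw [paf_eq_of_sign v X A hA, paf_eq_of_sign v Y B hB]
  linarith
end

section
/- If a periodic Golay pair of length v exists, then a Hadamard matrix of order 2v exists. -/
/-!
For `M = circulant A` and `N = circulant B`, the two-circulant array `[[M, N], [Nᵀ, -Mᵀ]]` has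
entries `±1`. Circulant matrices commute with each other and with their transposes, so the
off-diagonal blocks of its Gram matrix vanish and both diagonal blocks equal `M Mᵀ + N Nᵀ`,
whose `(i, j)` entry is `PAF_A(i - j) + PAF_B(i - j)`: that is `2v` on the diagonal and `0` off it.
-/

open Finset

open Matrix

def IsHadamardMatrix {ι : Type*} [Fintype ι] [DecidableEq ι] (H : Matrix ι ι ℤ) : Prop :=
  (∀ i j, H i j = 1 ∨ H i j = -1) ∧ H * Hᵀ = (Fintype.card ι : ℤ) • 1

theorem IsHadamardMatrix.submatrix_equiv {ι κ : Type*} [Fintype ι] [DecidableEq ι] [Fintype κ]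
    [DecidableEq κ] {H : Matrix ι ι ℤ} (hH : IsHadamardMatrix H) (e : κ ≃ ι) :
    IsHadamardMatrix (H.submatrix e e) := by
  refine ⟨fun i j => hH.1 (e i) (e j), ?_⟩
  rw [transpose_submatrix, submatrix_mul_equiv, hH.2, Fintype.card_congr e]
  exact congrArg ((Fintype.card ι : ℤ) • ·) (submatrix_one_equiv (α := ℤ) e)

theorem fromBlocks_mul_transpose_eq_smul_one {n R : Type*} [Fintype n] [DecidableEq n]
    [CommRing R] {M N : Matrix n n R} {c : R} (hMN : M * N = N * M)
    (hM : Mᵀ * M = M * Mᵀ) (hN : Nᵀ * N = N * Nᵀ) (hc : M * Mᵀ + N * Nᵀ = c • 1) :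
    fromBlocks M N Nᵀ (-Mᵀ) * (fromBlocks M N Nᵀ (-Mᵀ))ᵀ = c • 1 := by
  have hMNt : Nᵀ * Mᵀ = Mᵀ * Nᵀ := by rw [← transpose_mul, hMN, transpose_mul]
  simp only [fromBlocks_transpose, transpose_transpose, transpose_neg]
  rw [fromBlocks_multiply, ← fromBlocks_one, fromBlocks_smul, smul_zero, mul_neg, hMN, hMNt,
    neg_mul_neg, hM, hN, add_comm (N * Nᵀ), hc, add_neg_cancel, neg_mul, add_neg_cancel]

section Circulant

variable {v : ℕ} [NeZero v]

theorem paf_eq_sum (A : ZMod v → ℤ) (s : ZMod v) :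
    paf v A s = ∑ t : ZMod v, A t * A (t + s) := by
  refine Finset.sum_nbij' (fun i => (i : ZMod v)) ZMod.val (fun _ _ => mem_univ _)
    (fun t _ => mem_range.2 t.val_lt) (fun i hi => ZMod.val_natCast_of_lt (mem_range.1 hi))
    (fun t _ => ZMod.natCast_zmod_val t) (fun _ _ => rfl)

theorem circulant_mul_transpose_apply (A : ZMod v → ℤ) (i j : ZMod v) :
    (circulant A * (circulant A)ᵀ) i j = paf v A (i - j) := by
  rw [paf_eq_sum, mul_apply]
  refine Fintype.sum_equiv (Equiv.subLeft j) _ _ fun k => ?_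
  simp only [transpose_apply, circulant_apply, Equiv.subLeft_apply,
    show j - k + (i - j) = i - k by ring]
  ring

theorem paf_zero_of_sign {A : ZMod v → ℤ} (hA : ∀ i, A i = 1 ∨ A i = -1) :
    paf v A 0 = v := by
  rw [paf_eq_sum]
  calc ∑ t : ZMod v, A t * A (t + 0) = ∑ _t : ZMod v, 1 := by
        refine sum_congr rfl fun t _ => ?_
        rcases hA t with h | h <;> simp [h]
    _ = v := by simp [ZMod.card]

theorem circulant_gram_add_eq_smul_one {A B : ZMod v → ℤ}
    (hA : ∀ i, A i = 1 ∨ A i = -1) (hB : ∀ i, B i = 1 ∨ B i = -1)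
    (hAB : ∀ s : ZMod v, s ≠ 0 → paf v A s + paf v B s = 0) :
    circulant A * (circulant A)ᵀ + circulant B * (circulant B)ᵀ = (2 * v : ℤ) • 1 := by
  ext i j
  rw [Matrix.add_apply, circulant_mul_transpose_apply, circulant_mul_transpose_apply,
    Matrix.smul_apply]
  by_cases hij : i = j
  · rw [hij, sub_self, paf_zero_of_sign hA, paf_zero_of_sign hB, one_apply_eq]
    ring
  · rw [hAB _ (sub_ne_zero.2 hij), one_apply_ne hij, smul_zero]

theorem isHadamardMatrix_fromBlocks_circulant {A B : ZMod v → ℤ}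
    (hA : ∀ i, A i = 1 ∨ A i = -1) (hB : ∀ i, B i = 1 ∨ B i = -1)
    (hAB : ∀ s : ZMod v, s ≠ 0 → paf v A s + paf v B s = 0) :
    IsHadamardMatrix
      (fromBlocks (circulant A) (circulant B) (circulant B)ᵀ (-(circulant A)ᵀ)) := by
  have hnormal (C : ZMod v → ℤ) :
      (circulant C)ᵀ * circulant C = circulant C * (circulant C)ᵀ := by
    rw [transpose_circulant]; exact circulant_mul_comm _ _
  refine ⟨?_, ?_⟩
  · rintro (i | i) (j | j)
    · exact hA _
    · exact hB _
    · exact hB _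
    · rcases hA (j - i) with h | h <;> simp [h]
  · rw [Fintype.card_sum, ZMod.card, Nat.cast_add, ← two_mul]
    exact fromBlocks_mul_transpose_eq_smul_one (circulant_mul_comm A B) (hnormal A) (hnormal B)
      (circulant_gram_add_eq_smul_one hA hB hAB)

end Circulant

theorem periodic_golay_gives_hadamard (v : ℕ) (hv : 0 < v)
    (h : ∃ A B : ZMod v → ℤ,
      (∀ i, A i = 1 ∨ A i = -1) ∧ (∀ i, B i = 1 ∨ B i = -1) ∧
      ∀ s : ZMod v, s ≠ 0 → paf v A s + paf v B s = 0) :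
    ∃ H : Matrix (Fin (2 * v)) (Fin (2 * v)) ℤ,
      (∀ i j, H i j = 1 ∨ H i j = -1) ∧
      H * H.transpose = ((2 * v : ℤ)) • (1 : Matrix (Fin (2 * v)) (Fin (2 * v)) ℤ) := by
  have : NeZero v := ⟨hv.ne'⟩
  obtain ⟨A, B, hA, hB, hAB⟩ := h
  have e : Fin (2 * v) ≃ ZMod v ⊕ ZMod v :=
    Fintype.equivOfCardEq (by simp [ZMod.card, two_mul])
  obtain ⟨hsign, hgram⟩ := (isHadamardMatrix_fromBlocks_circulant hA hB hAB).submatrix_equiv e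
  refine ⟨_, hsign, ?_⟩
  rwa [Fintype.card_fin, Nat.cast_mul, Nat.cast_two] at hgram
end

section
/- There exists a periodic Golay pair of length 164. -/
open Finset

/-!
The pair consists of the ±1 sequences `signSeq X`, `signSeq Y` that are `-1` exactly on the two
base blocks `X = H·J`, `Y = H·K` of the supplementary difference set. Expanding `signSeq X` as
`1 - 2·1_X` gives `PAF(s) = v - 4(|X| - λ_X(s))`, where `λ_X(s)` counts the ordered pairs of `X`
with difference `s`; so the PAFs cancel at every `s ≠ 0` precisely when
`λ_X(s) + λ_Y(s) = |X| + |Y| - v/2 = 81 + 73 - 82 = 72`, which is the SDS property.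
Because `X` and `Y` are unions of `H`-orbits, `λ_X` and `λ_Y` are constant on the orbits of `±H`
on `ZMod 164`, so the SDS property has to be checked by computation only on 18 representatives.
-/

open scoped Pointwise

theorem ZMod.sum_range_natCast {v : ℕ} [NeZero v] {M : Type*} [AddCommMonoid M]
    (f : ZMod v → M) : ∑ i ∈ range v, f i = ∑ i : ZMod v, f i :=
  sum_nbij' (↑) ZMod.val (by simp) (by simp [ZMod.val_lt])
    (fun i hi => ZMod.val_cast_of_lt (mem_range.mp hi)) (fun x _ => ZMod.natCast_zmod_val x)
    (fun _ _ => rfl)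

section DiffCount

variable {G : Type*} [DecidableEq G]

def diffCount [Add G] (X : Finset G) (c : G) : ℕ := #{x ∈ X | x + c ∈ X}

theorem card_filter_sub_eq_diffCount [AddCommGroup G] (X : Finset G) (c : G) :
    #{p ∈ X ×ˢ X | p.1 - p.2 = c} = diffCount X c :=
  card_nbij' Prod.snd (fun x => (x + c, x))
    (by rintro ⟨a, b⟩; simp only [sub_eq_iff_eq_add']; aesop)
    (by simp +contextual [Set.MapsTo])
    (by rintro ⟨a, b⟩; simp +contextual [sub_eq_iff_eq_add'])
    (fun _ _ => rfl)

theorem diffCount_neg [AddCommGroup G] (X : Finset G) (c : G) :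
    diffCount X (-c) = diffCount X c :=
  card_nbij' (· - c) (· + c) (by simp +contextual [Set.MapsTo, sub_eq_add_neg])
    (by simp +contextual [Set.MapsTo]) (fun _ _ => sub_add_cancel _ _)
    (fun _ _ => add_sub_cancel_right _ _)

theorem diffCount_mul_left [Ring G] {X : Finset G} {u : G} (hu : IsUnit u)
    (hX : ∀ x, u * x ∈ X ↔ x ∈ X) (c : G) : diffCount X (u * c) = diffCount X c := by
  obtain ⟨u, rfl⟩ := hu
  refine (card_nbij' ((u : G) * ·) (((u⁻¹ : Gˣ) : G) * ·) ?_ ?_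
    (fun x _ => u.inv_mul_cancel_left x) (fun x _ => u.mul_inv_cancel_left x)).symm
  · intro x hx
    simp only [coe_filter, Set.mem_ofPred_eq] at hx ⊢
    exact ⟨(hX x).2 hx.1, by rw [← mul_add]; exact (hX _).2 hx.2⟩
  · intro x hx
    simp only [coe_filter, Set.mem_ofPred_eq] at hx ⊢
    refine ⟨(hX _).1 ?_, (hX _).1 ?_⟩
    · rw [u.mul_inv_cancel_left]; exact hx.1
    · rw [mul_add, u.mul_inv_cancel_left]; exact hx.2

end DiffCount

theorem mul_left_mem_mul_iff {R : Type*} [CommMonoid R] [DecidableEq R] {H : Finset R}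
    (hH : ∀ a ∈ H, ∀ b ∈ H, a * b ∈ H) {u w : R} (hu : u ∈ H) (hw : w ∈ H) (huw : u * w = 1)
    (J : Finset R) (x : R) : u * x ∈ H * J ↔ x ∈ H * J := by
  simp only [mem_mul]
  constructor
  · rintro ⟨h, hh, j, hj, hx⟩
    refine ⟨w * h, hH w hw h hh, j, hj, ?_⟩
    rw [mul_assoc, hx, ← mul_assoc, mul_comm w u, huw, one_mul]
  · rintro ⟨h, hh, j, hj, rfl⟩
    exact ⟨u * h, hH u hu h hh, j, hj, mul_assoc _ _ _⟩

theorem diffCount_mul_left_of_mem {R : Type*} [CommRing R] [DecidableEq R] {H : Finset R}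
    (hH_mul : ∀ a ∈ H, ∀ b ∈ H, a * b ∈ H) (hH_inv : ∀ a ∈ H, ∃ b ∈ H, a * b = 1)
    (J : Finset R) {u : R} (hu : u ∈ H) (c : R) :
    diffCount (H * J) (u * c) = diffCount (H * J) c := by
  obtain ⟨w, hw, huw⟩ := hH_inv u hu
  exact diffCount_mul_left (.of_mul_eq_one w huw) (mul_left_mem_mul_iff hH_mul hu hw huw J) c

variable {v : ℕ}

theorem sdsCount_eq_diffCount_add_diffCount (X Y : Finset (ZMod v)) (c : ZMod v) :
    sdsCount v X Y c = diffCount X c + diffCount Y c := by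
  simp only [sdsCount, card_filter_sub_eq_diffCount]

def signSeq (X : Finset (ZMod v)) (i : ZMod v) : ℤ := if i ∈ X then -1 else 1

theorem signSeq_eq_one_or_neg_one (X : Finset (ZMod v)) (i : ZMod v) :
    signSeq X i = 1 ∨ signSeq X i = -1 := by
  unfold signSeq; split_ifs <;> simp

theorem paf_signSeq [NeZero v] (X : Finset (ZMod v)) (s : ZMod v) :
    paf v (signSeq X) s = (v : ℤ) - 4 * ((#X : ℤ) - diffCount X s) := by
  set ind : ZMod v → ℤ := fun i => if i ∈ X then 1 else 0 with hind
  have hsign : ∀ i, signSeq X i = 1 - 2 * ind i := by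
    intro i; simp only [signSeq, hind]; split_ifs <;> norm_num
  have hsum : ∑ i, ind i = #X := by simp [hind]
  have hshift : ∑ i, ind (i + s) = #X := by
    rw [← hsum]; exact Fintype.sum_equiv (Equiv.addRight s) _ _ (fun _ => rfl)
  have hpair : ∑ i, ind i * ind (i + s) = diffCount X s := by
    simp only [hind, ite_zero_mul_ite_zero, mul_one, sum_boole, diffCount]
    congr 2; ext x; simp
  have hexpand : ∀ i, signSeq X i * signSeq X (i + s) =
      1 - 2 * ind i - 2 * ind (i + s) + 4 * (ind i * ind (i + s)) := by
    intro i; rw [hsign, hsign]; ring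
  rw [paf, ZMod.sum_range_natCast (fun i => signSeq X i * signSeq X (i + s))]
  simp only [hexpand, sum_add_distrib, sum_sub_distrib, ← mul_sum, hsum, hshift, hpair, sum_const,
    card_univ, ZMod.card, nsmul_eq_mul, mul_one]
  ring

def IsPeriodicGolayPair (v : ℕ) (A B : ZMod v → ℤ) : Prop :=
  (∀ i, A i = 1 ∨ A i = -1) ∧ (∀ i, B i = 1 ∨ B i = -1) ∧
    ∀ s : ZMod v, s ≠ 0 → paf v A s + paf v B s = 0

theorem isPeriodicGolayPair_signSeq [NeZero v] {X Y : Finset (ZMod v)} {lam : ℕ}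
    (hsds : ∀ c, c ≠ 0 → sdsCount v X Y c = lam) (hparam : 2 * (#X + #Y) = v + 2 * lam) :
    IsPeriodicGolayPair v (signSeq X) (signSeq Y) := by
  refine ⟨signSeq_eq_one_or_neg_one X, signSeq_eq_one_or_neg_one Y, fun s hs => ?_⟩
  have hcount := hsds s hs
  rw [sdsCount_eq_diffCount_add_diffCount] at hcount
  rw [paf_signSeq, paf_signSeq]
  have hparamℤ : (2 * (#X + #Y) : ℤ) = v + 2 * lam := by exact_mod_cast hparam
  have hcountℤ : (diffCount X s + diffCount Y s : ℤ) = lam := by exact_mod_cast hcount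
  linear_combination -2 * hparamℤ + 4 * hcountℤ

def multiplierGroup : Finset (ZMod 164) := {1, 37, 57, 133, 141}

def baseBlockX : Finset (ZMod 164) :=
  multiplierGroup * {4, 5, 6, 10, 11, 12, 16, 20, 23, 25, 30, 33, 46, 51, 60, 65, 123}

def baseBlockY : Finset (ZMod 164) :=
  multiplierGroup * {3, 4, 11, 13, 16, 19, 20, 23, 30, 33, 41, 44, 46, 53, 66, 82, 123}

-- one residue from each orbit of `±multiplierGroup` on the nonzero residues
def orbitReps : Finset (ZMod 164) :=
  {1, 2, 3, 4, 5, 6, 8, 10, 11, 12, 15, 19, 24, 25, 30, 33, 41, 82}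

theorem multiplierGroup_mul_mem :
    ∀ a ∈ multiplierGroup, ∀ b ∈ multiplierGroup, a * b ∈ multiplierGroup := by
  decide +kernel

theorem multiplierGroup_exists_mul_eq_one :
    ∀ a ∈ multiplierGroup, ∃ b ∈ multiplierGroup, a * b = 1 := by
  decide +kernel

theorem card_baseBlockX : #baseBlockX = 81 := by decide +kernel

theorem card_baseBlockY : #baseBlockY = 73 := by decide +kernel

theorem exists_eq_mul_orbitReps :
    ∀ c : ZMod 164, c ≠ 0 → ∃ u ∈ multiplierGroup, ∃ r ∈ orbitReps, c = u * r ∨ c = -(u * r) := by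
  decide +kernel

theorem diffCount_orbitReps :
    ∀ r ∈ orbitReps, diffCount baseBlockX r + diffCount baseBlockY r = 72 := by
  decide +kernel

theorem sdsCount_baseBlocks (c : ZMod 164) (hc : c ≠ 0) :
    sdsCount 164 baseBlockX baseBlockY c = 72 := by
  obtain ⟨u, hu, r, hr, hc⟩ := exists_eq_mul_orbitReps c hc
  have hX : diffCount baseBlockX (u * r) = diffCount baseBlockX r :=
    diffCount_mul_left_of_mem multiplierGroup_mul_mem multiplierGroup_exists_mul_eq_one _ hu r
  have hY : diffCount baseBlockY (u * r) = diffCount baseBlockY r :=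
    diffCount_mul_left_of_mem multiplierGroup_mul_mem multiplierGroup_exists_mul_eq_one _ hu r
  rcases hc with rfl | rfl <;>
    rw [sdsCount_eq_diffCount_add_diffCount, ← diffCount_orbitReps r hr] <;>
    simp only [diffCount_neg, hX, hY]

theorem periodic_golay_pair_length_164 :
    ∃ A B : ZMod 164 → ℤ,
      (∀ i, A i = 1 ∨ A i = -1) ∧ (∀ i, B i = 1 ∨ B i = -1) ∧
      ∀ s : ZMod 164, s ≠ 0 → paf 164 A s + paf 164 B s = 0 :=
  ⟨signSeq baseBlockX, signSeq baseBlockY,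
    isPeriodicGolayPair_signSeq sdsCount_baseBlocks (by rw [card_baseBlockX, card_baseBlockY])⟩
end
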